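/- arXiv:2006.04338 — 4 statements merged into one kernel-verified Lean document; each statement's English description precedes it below -/
import Mathlib

section
/- For $\gamma \in (0,1)$ and $p \in [0,1]$, define $f(p) = \frac{p\gamma}{1-(1-p)\gamma^2} + \frac{(1-p)\gamma}{1-p\gamma^2}$. Then $f$ attains its maximum over $[0,1]$ at $p = 1/2$, with maximum value $\frac{2\gamma}{2-\gamma^2}$. -/
/-- The sum of the two value functions at state `S₃` in the two-task GridWorld,
as a function of the probability `p` of taking action Left. -/
noncomputable def twoTaskValue (γ p : ℝ) : ℝ :=
  p * γ / (1 - (1 - p) * γ ^ 2) + (1 - p) * γ / (1 - p * γ ^ 2)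

theorem stmt_0 (γ : ℝ) (hγ : γ ∈ Set.Ioo (0 : ℝ) 1) :
    (∀ p ∈ Set.Icc (0 : ℝ) 1, twoTaskValue γ p ≤ twoTaskValue γ (1 / 2)) ∧
    twoTaskValue γ (1 / 2) = 2 * γ / (2 - γ ^ 2) := by
  obtain ⟨hγ0, hγ1⟩ := hγ
  have ha0 : (0:ℝ) < γ ^ 2 := by positivity
  have ha1 : γ ^ 2 < 1 := by nlinarith
  have key : twoTaskValue γ (1 / 2) = 2 * γ / (2 - γ ^ 2) := by
    unfold twoTaskValue
    have h : (2 - γ ^ 2) ≠ 0 := by nlinarith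
    have h2 : (1 - (1 - 1/2) * γ ^ 2) ≠ 0 := by nlinarith
    have h3 : (1 - (1/2) * γ ^ 2) ≠ 0 := by nlinarith
    rw [div_add_div _ _ h2 h3, div_eq_div_iff (mul_ne_zero h2 h3) h]
    ring
  refine ⟨fun p hp => ?_, key⟩
  obtain ⟨hp0, hp1⟩ := hp
  rw [key]
  unfold twoTaskValue
  have hd1 : (0:ℝ) < 1 - (1 - p) * γ ^ 2 := by nlinarith
  have hd2 : (0:ℝ) < 1 - p * γ ^ 2 := by nlinarith
  have hd3 : (0:ℝ) < 2 - γ ^ 2 := by nlinarith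
  rw [div_add_div _ _ (ne_of_gt hd1) (ne_of_gt hd2), div_le_div_iff₀ (by positivity) hd3]
  nlinarith [mul_nonneg (mul_nonneg (mul_nonneg ha0.le (by nlinarith : (0:ℝ) ≤ 1 - γ ^ 2)) (sq_nonneg (2*p-1))) hγ0.le]
end

section
/- The gradient of the scaled negative relative entropy $\zeta(\theta) = \frac{\lambda}{|\mathcal{S}||\mathcal{A}|}\sum_{s,a}\log\pi_\theta(a|s)$ under the softmax parameterization has Euclidean norm bounded by $\lambda(\frac{1}{\sqrt{|\mathcal{A}|}}+1)$; specifically, $\nabla_{\theta_s}\zeta(\theta) = \frac{\lambda}{|\mathcal{S}|}(\frac{1}{|\mathcal{A}|}\mathbf{1} - \pi_\theta(\cdot|s))$ and $\|\nabla_\theta \zeta(\theta)\| \le \lambda(\frac{1}{\sqrt{|\mathcal{A}|}}+1)$. -/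
/-!
Since `log π_θ(a|s) = θ_{s,a} - log ∑_{a'} exp θ_{s,a'}`, the derivative of `ζ` in a direction `V`
is `λ/(|S||A|) ∑_s (∑_a V_{s,a} - |A| ∑_a V_{s,a} π_θ(a|s))`; for a coordinate direction this is
`λ/|S| (1/|A| - π_θ(a|s))`. For the norm, each row satisfies
`∑_a (1/|A| - π_θ(a|s))² = ∑_a π_θ(a|s)² - 1/|A| ≤ 1`, so the squared norm is at most `λ²/|S| ≤ λ²`.
-/

/-- Softmax policy parameterization. -/
noncomputable def softmax {S A : Type*} [Fintype A] (θ : S → A → ℝ) (s : S) (a : A) : ℝ :=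
  Real.exp (θ s a) / ∑ a' : A, Real.exp (θ s a')

/-- Scaled negative relative entropy `ζ(θ) = λ/(|S||A|) ∑_{s,a} log π_θ(a|s)`. -/
noncomputable def zeta {S A : Type*} [Fintype S] [Fintype A] (lam : ℝ) (θ : S → A → ℝ) : ℝ :=
  lam / ((Fintype.card S : ℝ) * (Fintype.card A : ℝ)) *
    ∑ s : S, ∑ a : A, Real.log (softmax θ s a)

open Finset

section Softmax

variable {S A : Type*} [Fintype A]

lemma sum_exp_pos [Nonempty A] (φ : A → ℝ) : 0 < ∑ a, Real.exp (φ a) :=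
  sum_pos (fun _ _ => Real.exp_pos _) univ_nonempty

lemma softmax_nonneg (θ : S → A → ℝ) (s : S) (a : A) : 0 ≤ softmax θ s a := by
  unfold softmax
  positivity

lemma sum_softmax [Nonempty A] (θ : S → A → ℝ) (s : S) : ∑ a, softmax θ s a = 1 := by
  simp only [softmax, ← sum_div, div_self (sum_exp_pos (θ s)).ne']

lemma log_softmax [Nonempty A] (θ : S → A → ℝ) (s : S) (a : A) :
    Real.log (softmax θ s a) = θ s a - Real.log (∑ a', Real.exp (θ s a')) := by
  rw [softmax, Real.log_div (Real.exp_ne_zero _) (sum_exp_pos (θ s)).ne', Real.log_exp]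

lemma sum_log_softmax [Nonempty A] (θ : S → A → ℝ) (s : S) :
    ∑ a, Real.log (softmax θ s a)
      = ∑ a, θ s a - Fintype.card A * Real.log (∑ a, Real.exp (θ s a)) := by
  simp only [log_softmax, sum_sub_distrib, sum_const, card_univ, nsmul_eq_mul]

end Softmax

section Derivative

variable {S A : Type*} [Fintype A] [Nonempty A]

lemma hasDerivAt_log_sum_exp_line (φ v : A → ℝ) :
    HasDerivAt (fun t : ℝ => Real.log (∑ a, Real.exp (φ a + t * v a)))
      (∑ a, v a * (Real.exp (φ a) / ∑ a', Real.exp (φ a'))) 0 := by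
  have hsum : HasDerivAt (fun t : ℝ => ∑ a, Real.exp (φ a + t * v a))
      (∑ a, Real.exp (φ a + 0 * v a) * v a) 0 :=
    HasDerivAt.fun_sum fun a _ => ((hasDerivAt_mul_const (v a)).const_add (φ a)).exp
  convert hsum.log (by simpa using (sum_exp_pos φ).ne') using 1
  simp only [zero_mul, add_zero, sum_div]
  exact sum_congr rfl fun a _ => by ring

lemma hasDerivAt_sum_log_softmax_line (θ V : S → A → ℝ) (s : S) :
    HasDerivAt (fun t : ℝ => ∑ a, Real.log (softmax (fun s a => θ s a + t * V s a) s a))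
      (∑ a, V s a - Fintype.card A * ∑ a, V s a * softmax θ s a) 0 := by
  simp only [sum_log_softmax]
  exact (HasDerivAt.fun_sum fun a _ => (hasDerivAt_mul_const (V s a)).const_add (θ s a)).sub
    ((hasDerivAt_log_sum_exp_line (θ s) (V s)).const_mul _)

lemma hasDerivAt_zeta_line [Fintype S] (lam : ℝ) (θ V : S → A → ℝ) :
    HasDerivAt (fun t : ℝ => zeta lam (fun s a => θ s a + t * V s a))
      (lam / (Fintype.card S * Fintype.card A) *
        ∑ s, (∑ a, V s a - Fintype.card A * ∑ a, V s a * softmax θ s a)) 0 :=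
  (HasDerivAt.fun_sum fun s _ => hasDerivAt_sum_log_softmax_line θ V s).const_mul _

end Derivative

lemma hasDerivAt_zeta_add_single {S A : Type*} [Fintype S] [Fintype A] [DecidableEq S]
    [DecidableEq A] (lam : ℝ) (θ : S → A → ℝ) (s : S) (a : A) :
    HasDerivAt
      (fun t : ℝ => zeta lam (fun s'' a'' => θ s'' a'' + if s'' = s ∧ a'' = a then t else 0))
      (lam / (Fintype.card S : ℝ) * (1 / (Fintype.card A : ℝ) - softmax θ s a)) 0 := by
  have : Nonempty A := ⟨a⟩
  have hA : (Fintype.card A : ℝ) ≠ 0 := Nat.cast_ne_zero.mpr Fintype.card_ne_zero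
  have h := hasDerivAt_zeta_line lam θ (fun s' a' => if s' = s ∧ a' = a then 1 else 0)
  simp only [mul_ite, mul_one, mul_zero] at h
  convert h using 1
  simp only [one_div, ite_and, sum_ite_irrel, sum_ite_eq', mem_univ, ↓reduceIte, sum_const_zero,
    ite_mul, one_mul, zero_mul, mul_ite, mul_zero, sum_sub_distrib]
  field_simp


section Norm

variable {S A : Type*} [Fintype A]

lemma sum_sq_inv_card_sub_eq (p : A → ℝ) (hp : ∑ a, p a = 1) :
    ∑ a, (1 / (Fintype.card A : ℝ) - p a) ^ 2 = ∑ a, p a ^ 2 - 1 / Fintype.card A := by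
  have : Nonempty A := by
    by_contra h
    simp [not_nonempty_iff.mp h] at hp
  have hA : (Fintype.card A : ℝ) ≠ 0 := Nat.cast_ne_zero.mpr Fintype.card_ne_zero
  simp only [sub_sq, sum_add_distrib, sum_sub_distrib, ← mul_sum, hp, sum_const, card_univ,
    nsmul_eq_mul]
  field_simp
  ring

lemma sum_sq_inv_card_sub_softmax_le_one (θ : S → A → ℝ) (s : S) :
    ∑ a, (1 / (Fintype.card A : ℝ) - softmax θ s a) ^ 2 ≤ 1 := by
  cases isEmpty_or_nonempty A
  · simp
  have hsq : ∑ a, softmax θ s a ^ 2 ≤ 1 := by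
    simpa [sum_softmax] using
      sum_sq_le_sq_sum_of_nonneg (s := univ) fun a _ => softmax_nonneg θ s a
  have hinv : (0 : ℝ) ≤ 1 / Fintype.card A := by positivity
  rw [sum_sq_inv_card_sub_eq _ (sum_softmax θ s)]
  linarith

lemma sqrt_sum_sq_grad_zeta_le [Fintype S] (lam : ℝ) (hlam : 0 ≤ lam) (θ : S → A → ℝ) :
    Real.sqrt (∑ s, ∑ a,
        (lam / (Fintype.card S : ℝ) * (1 / (Fintype.card A : ℝ) - softmax θ s a)) ^ 2) ≤ lam := by
  have hsum : ∑ s, ∑ a,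
      (lam / (Fintype.card S : ℝ) * (1 / (Fintype.card A : ℝ) - softmax θ s a)) ^ 2
        ≤ lam ^ 2 := by
    simp only [mul_pow, ← mul_sum]
    calc (lam / Fintype.card S) ^ 2 * ∑ s, ∑ a, (1 / (Fintype.card A : ℝ) - softmax θ s a) ^ 2
        ≤ (lam / Fintype.card S) ^ 2 * ∑ _s : S, 1 := by
          gcongr with s
          exact sum_sq_inv_card_sub_softmax_le_one θ s
      _ ≤ lam ^ 2 := by
          rcases isEmpty_or_nonempty S
          · simp [sq_nonneg]
          have hS : (1 : ℝ) ≤ Fintype.card S := Nat.one_le_cast.mpr Fintype.card_pos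
          rw [sum_const, card_univ, nsmul_one, div_pow, sq (Fintype.card S : ℝ)]
          field_simp
          nlinarith [sq_nonneg lam]
  calc _ ≤ Real.sqrt (lam ^ 2) := Real.sqrt_le_sqrt hsum
    _ = lam := Real.sqrt_sq hlam

end Norm

/-- The gradient of `ζ` satisfies `∂ζ/∂θ_{s,a} = λ/|S| (1/|A| - π_θ(a|s))`, and its
Euclidean norm is bounded by `λ (1/√|A| + 1)`. -/
theorem stmt_12 {S A : Type*} [Fintype S] [Fintype A] [DecidableEq S] [DecidableEq A]
    (lam : ℝ) (hlam : 0 < lam) (θ : S → A → ℝ) :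
    (∀ (s : S) (a : A),
      HasDerivAt
        (fun t : ℝ => zeta lam (fun s'' a'' => θ s'' a'' + if s'' = s ∧ a'' = a then t else 0))
        (lam / (Fintype.card S : ℝ) * (1 / (Fintype.card A : ℝ) - softmax θ s a)) 0) ∧
    Real.sqrt (∑ s : S, ∑ a : A,
        (lam / (Fintype.card S : ℝ) * (1 / (Fintype.card A : ℝ) - softmax θ s a)) ^ 2)
      ≤ lam * (1 / Real.sqrt (Fintype.card A : ℝ) + 1) := by
  refine ⟨hasDerivAt_zeta_add_single lam θ, (sqrt_sum_sq_grad_zeta_le lam hlam.le θ).trans ?_⟩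
  have : (0 : ℝ) ≤ 1 / Real.sqrt (Fintype.card A) := by positivity
  exact le_mul_of_one_le_right hlam.le (by linarith)
end

section
/- Performance difference: for any two policies $\pi$ and $\tilde\pi$ in a finite discounted MDP with discount $\gamma$, $V^{\pi}(\rho) - V^{\tilde\pi}(\rho) = \frac{1}{1-\gamma}\,\mathbb{E}_{s\sim d_\rho^{\pi}}\,\mathbb{E}_{a\sim\pi(\cdot|s)}[A^{\tilde\pi}(s,a)]$, where $d_\rho^\pi$ is the discounted state visitation distribution of $\pi$ started from $\rho$ and $A^{\tilde\pi}$ is the advantage of $\tilde\pi$. -/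
/-- Performance difference lemma for a finite discounted MDP: for policies `π` and `π̃`,
`V^π(ρ) - V^π̃(ρ) = 1/(1-γ) ∑_s d_ρ^π(s) ∑_a π(a|s) A^π̃(s,a)`.
Value functions are characterized by their Bellman equations, and `d_ρ^π` by its
fixed-point equation. -/
theorem stmt_14 {S A : Type*} [Fintype S] [Fintype A]
    (γ : ℝ) (hγ : γ ∈ Set.Ioo (0 : ℝ) 1)
    (P : S → A → S → ℝ) (R : S → A → ℝ)
    (hPnn : ∀ s a s', 0 ≤ P s a s') (hProw : ∀ s a, ∑ s', P s a s' = 1)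
    (hR : ∀ s a, R s a ∈ Set.Icc (0 : ℝ) 1)
    (π πt : S → A → ℝ)
    (hπnn : ∀ s a, 0 ≤ π s a) (hπsum : ∀ s, ∑ a, π s a = 1)
    (hπtnn : ∀ s a, 0 ≤ πt s a) (hπtsum : ∀ s, ∑ a, πt s a = 1)
    (ρ : S → ℝ) (hρnn : ∀ s, 0 ≤ ρ s) (hρsum : ∑ s, ρ s = 1)
    (Vπ Vt : S → ℝ) (Qt : S → A → ℝ) (Adv : S → A → ℝ) (d : S → ℝ)
    (hVπ : ∀ s, Vπ s = ∑ a, π s a * (R s a + γ * ∑ s', P s a s' * Vπ s'))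
    (hVt : ∀ s, Vt s = ∑ a, πt s a * (R s a + γ * ∑ s', P s a s' * Vt s'))
    (hQt : ∀ s a, Qt s a = R s a + γ * ∑ s', P s a s' * Vt s')
    (hAdv : ∀ s a, Adv s a = Qt s a - Vt s)
    (hd : ∀ s, d s = (1 - γ) * ρ s + γ * ∑ s', d s' * ∑ a, π s' a * P s' a s) :
    (∑ s, ρ s * Vπ s) - (∑ s, ρ s * Vt s) =
      (1 / (1 - γ)) * ∑ s, d s * ∑ a, π s a * Adv s a := by
  set g : S → ℝ := fun s => Vπ s - Vt s with hg
  have hγ1 : (1 : ℝ) - γ ≠ 0 := by have := hγ.2; linarith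
  -- Bellman-type equation for g
  have key1 : ∀ s, g s = (∑ a, π s a * Adv s a)
      + γ * ∑ a, π s a * ∑ s', P s a s' * g s' := by
    intro s
    have hVt' : Vt s = ∑ a, π s a * Vt s := by
      rw [← Finset.sum_mul, hπsum, one_mul]
    simp only [hg]
    conv_lhs => rw [hVπ s, hVt']
    rw [← Finset.sum_sub_distrib, Finset.mul_sum, ← Finset.sum_add_distrib]
    refine Finset.sum_congr rfl fun a _ => ?_
    have hsplit : ∑ s', P s a s' * (Vπ s' - Vt s') =
        (∑ s', P s a s' * Vπ s') - ∑ s', P s a s' * Vt s' := by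
      rw [← Finset.sum_sub_distrib]
      exact Finset.sum_congr rfl fun s' _ => by ring
    rw [hAdv, hQt, hsplit]
    ring
  -- visitation fixed-point consequence
  have key2 : ∑ s, d s * g s = (1 - γ) * (∑ s, ρ s * g s)
      + γ * ∑ s, d s * ∑ a, π s a * ∑ s', P s a s' * g s' := by
    have h1 : ∑ s, d s * g s =
        ∑ s, ((1 - γ) * ρ s + γ * ∑ s', d s' * ∑ a, π s' a * P s' a s) * g s :=
      Finset.sum_congr rfl fun s _ => by rw [← hd s]
    rw [h1]
    simp only [add_mul, Finset.sum_add_distrib]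
    congr 1
    · rw [Finset.mul_sum]
      exact Finset.sum_congr rfl fun s _ => by ring
    · rw [Finset.mul_sum]
      have hswap : ∑ s, (∑ s', d s' * ∑ a, π s' a * P s' a s) * g s
          = ∑ s', d s' * ∑ a, π s' a * ∑ s, P s' a s * g s := by
        simp only [Finset.sum_mul, Finset.mul_sum]
        rw [Finset.sum_comm]
        refine Finset.sum_congr rfl fun s' _ => ?_
        rw [Finset.sum_comm]
        exact Finset.sum_congr rfl fun a _ => Finset.sum_congr rfl fun s _ => by ring
      calc ∑ s, γ * (∑ s', d s' * ∑ a, π s' a * P s' a s) * g s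
          = γ * ∑ s, (∑ s', d s' * ∑ a, π s' a * P s' a s) * g s := by
            rw [Finset.mul_sum]; exact Finset.sum_congr rfl fun s _ => by ring
        _ = γ * ∑ s', d s' * ∑ a, π s' a * ∑ s, P s' a s * g s := by rw [hswap]
        _ = ∑ s', γ * (d s' * ∑ a, π s' a * ∑ s, P s' a s * g s) := by rw [Finset.mul_sum]
  -- combine
  have key3 : ∑ s, d s * g s = (∑ s, d s * ∑ a, π s a * Adv s a)
      + γ * ∑ s, d s * ∑ a, π s a * ∑ s', P s a s' * g s' := by
    calc ∑ s, d s * g s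
        = ∑ s, d s * ((∑ a, π s a * Adv s a)
            + γ * ∑ a, π s a * ∑ s', P s a s' * g s') :=
          Finset.sum_congr rfl fun s _ => by rw [← key1 s]
      _ = _ := by
          simp only [mul_add, Finset.sum_add_distrib]
          congr 1
          rw [Finset.mul_sum]
          exact Finset.sum_congr rfl fun s _ => by ring
  have hmain : (1 - γ) * (∑ s, ρ s * g s) = ∑ s, d s * ∑ a, π s a * Adv s a := by
    linarith [key2, key3]
  have hlhs : (∑ s, ρ s * Vπ s) - (∑ s, ρ s * Vt s) = ∑ s, ρ s * g s := by
    rw [← Finset.sum_sub_distrib]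
    exact Finset.sum_congr rfl fun s _ => by simp [hg]; ring
  rw [hlhs, ← hmain]
  field_simp
end

section
/- Under the conditions of the previous claim (aggregate gradient bounded by $\frac{\lambda N}{2|\mathcal{S}||\mathcal{A}|}$ in norm and $\pi_\theta(a|s) \ge \frac{1}{2|\mathcal{A}|}$ for the relevant $(s,a)$), the maximum aggregate weighted advantage is bounded: $\max_{a}\sum_{i: s\in\mathcal{S}_i}\frac{d_{i,\mu_i}^{\pi_\theta}(s)}{1-\gamma_i}A_i^{\pi_\theta}(s,a) \le \frac{2\lambda N}{|\mathcal{S}|}$ for every state $s$. -/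
/-- The gradient coordinate of the regularized objective `L_i^λ`:
`∂L_i^λ/∂θ_{s,a} = 1/(1-γ_i) d_i(s) π_θ(a|s) A_i(s,a) + λ/|S| (1/|A| - π_θ(a|s))`. -/
noncomputable def gradL {S A : Type*} [Fintype S] [Fintype A]
    (lam : ℝ) (γi : ℝ) (di : S → ℝ) (Advi : S → A → ℝ) (θ : S → A → ℝ) (s : S) (a : A) : ℝ :=
  1 / (1 - γi) * di s * softmax θ s a * Advi s a +
    lam / (Fintype.card S : ℝ) * (1 / (Fintype.card A : ℝ) - softmax θ s a)

/-!
At a fixed `(s, a)` write `π = π_θ(a|s)`, `T` for the aggregate weighted advantage and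
`κ = λN/|S|`. The aggregate gradient equals `π T + κ (1/|A| - π)`, so the gradient bound gives
`π T ≤ κ π - κ/(2|A|) ≤ κ π`. Since a softmax policy is strictly positive, `T ≤ κ ≤ 2κ`.
-/

open Finset

theorem softmax_pos {S A : Type*} [Fintype A] (θ : S → A → ℝ) (s : S) (a : A) :
    0 < softmax θ s a :=
  div_pos (Real.exp_pos _) (sum_pos (fun _ _ => Real.exp_pos _) ⟨a, mem_univ a⟩)

theorem sum_gradL_eq {S A : Type*} [Fintype S] [Fintype A] {N : ℕ} (lam : ℝ)
    (γ : Fin N → ℝ) (dvis : Fin N → S → ℝ) (Adv : Fin N → S → A → ℝ) (θ : S → A → ℝ)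
    (s : S) (a : A) :
    ∑ i, gradL lam (γ i) (dvis i) (Adv i) θ s a =
      softmax θ s a * ∑ i, dvis i s / (1 - γ i) * Adv i s a +
        lam * N / Fintype.card S * (1 / Fintype.card A - softmax θ s a) := by
  simp only [gradL, sum_add_distrib, sum_const, card_univ, Fintype.card_fin, nsmul_eq_mul,
    mul_sum]
  congr 1
  · exact sum_congr rfl fun i _ => by ring
  · ring

theorem nonneg_of_abs_le_div {x κ b : ℝ} (hb : 0 < b) (h : |x| ≤ κ / b) : 0 ≤ κ := by
  simpa using (le_div_iff₀ hb).mp ((abs_nonneg x).trans h)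

theorem le_of_abs_mul_add_regularizer_le {π T κ b : ℝ} (hπ : 0 < π) (hb : 0 < b)
    (h : |π * T + κ * (1 / b - π)| ≤ κ / (2 * b)) : T ≤ κ := by
  have hκ : 0 ≤ κ := nonneg_of_abs_le_div (by positivity) h
  have hsplit : κ * (1 / b) = 2 * (κ / (2 * b)) := by field_simp
  have hπT : π * T ≤ π * κ := by
    linarith [(abs_le.mp h).2, div_nonneg hκ (by positivity : (0 : ℝ) ≤ 2 * b)]
  exact le_of_mul_le_mul_left hπT hπ

theorem stmt_19_general {S A : Type*} [Fintype S] [Fintype A]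
    (N : ℕ) (lam : ℝ)
    (γ : Fin N → ℝ)
    (dvis : Fin N → S → ℝ)
    (Adv : Fin N → S → A → ℝ) (θ : S → A → ℝ)
    (hgrad : ∀ (s : S) (a : A),
      |∑ i, gradL lam (γ i) (dvis i) (Adv i) θ s a|
        ≤ lam * N / (2 * (Fintype.card S : ℝ) * (Fintype.card A : ℝ))) :
    ∀ (s : S) (a : A),
      ∑ i, dvis i s / (1 - γ i) * Adv i s a ≤ 2 * lam * N / (Fintype.card S : ℝ) := by
  intro s a
  have hS : (0 : ℝ) < Fintype.card S := by have := Nonempty.intro s; positivity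
  have hA : (0 : ℝ) < Fintype.card A := by have := Nonempty.intro a; positivity
  have hgrad_sa := hgrad s a
  rw [sum_gradL_eq, show lam * N / (2 * (Fintype.card S : ℝ) * Fintype.card A)
    = lam * N / Fintype.card S / (2 * Fintype.card A) by field_simp] at hgrad_sa
  have hT := le_of_abs_mul_add_regularizer_le (softmax_pos θ s a) hA hgrad_sa
  have hκ := nonneg_of_abs_le_div (by positivity) hgrad_sa
  calc _ ≤ lam * N / Fintype.card S := hT
    _ ≤ 2 * lam * N / Fintype.card S := by rw [mul_assoc 2, mul_div_assoc 2]; linarith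

/-- If the aggregate gradient is bounded by `λN/(2|S||A|)` in absolute value at all `(s,a)`,
and `π_θ(a|s) ≥ 1/(2|A|)` whenever the aggregate weighted advantage at `(s,a)` is
nonnegative, then for every state `s` and action `a`,
`∑_i d_i(s)/(1-γ_i) A_i(s,a) ≤ 2λN/|S|` (hence so is the max over actions). -/
theorem stmt_19 {S A : Type*} [Fintype S] [Fintype A] [Nonempty S] [Nonempty A]
    (N : ℕ) (lam : ℝ) (hlam : 0 < lam)
    (γ : Fin N → ℝ) (hγ : ∀ i, γ i ∈ Set.Ioo (0 : ℝ) 1)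
    (dvis : Fin N → S → ℝ) (hd : ∀ i s, 0 ≤ dvis i s)
    (Adv : Fin N → S → A → ℝ) (θ : S → A → ℝ)
    (hgrad : ∀ (s : S) (a : A),
      |∑ i, gradL lam (γ i) (dvis i) (Adv i) θ s a|
        ≤ lam * N / (2 * (Fintype.card S : ℝ) * (Fintype.card A : ℝ)))
    (hpi : ∀ (s : S) (a : A),
      0 ≤ ∑ i, dvis i s / (1 - γ i) * Adv i s a →
        softmax θ s a ≥ 1 / (2 * (Fintype.card A : ℝ))) :
    ∀ (s : S) (a : A),
      ∑ i, dvis i s / (1 - γ i) * Adv i s a ≤ 2 * lam * N / (Fintype.card S : ℝ) :=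
  stmt_19_general N lam γ dvis Adv θ hgrad
end
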